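/- arXiv:2108.05428 — 9 statements merged into one kernel-verified Lean document; each statement's English description precedes it below -/
import Mathlib

section
/- Let 𝓕 be a set of facts, 𝓐 a set of actions, and a ∈ 𝓐. If a is universally uniformly reversible, then add(a) = ∅ and del(a) ⊆ pre(a); in particular, every fact occurring in the effects of a occurs in its precondition. -/
/-- A STRIPS action over a type `F` of facts: a triple ⟨pre, add, del⟩ of sets of
facts with `add ∩ del = ∅` and `pre ∩ add = ∅`. States are subsets of `F`. -/
structure PlanAct (F : Type) where
  pre : Set F
  add : Set F
  del : Set F
  add_del : add ∩ del = ∅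
  pre_add : pre ∩ add = ∅

/-- Result of applying action `a` to state `s` (meaningful when `a.pre ⊆ s`). -/
def PlanAct.apply {F : Type} (a : PlanAct F) (s : Set F) : Set F :=
  (s \ a.del) ∪ a.add

/-- A sequence of actions is applicable in a state if each action is applicable
in the successively produced states. -/
def SeqApplicable {F : Type} : List (PlanAct F) → Set F → Prop
  | [], _ => True
  | a :: π, s => a.pre ⊆ s ∧ SeqApplicable π (a.apply s)

/-- Result of applying a sequence of actions to a state. -/
def SeqApply {F : Type} : List (PlanAct F) → Set F → Set F
  | [], s => s
  | a :: π, s => SeqApply π (a.apply s)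

/-- `π` is an `S`-reverse plan for `a` (w.r.t. the action set `𝓐`): all actions of
`π` are from `𝓐` and, for every `s ∈ S` in which `a` is applicable, `π` is
applicable in `a[s]` and `π[a[s]] = s`. With `S = Set.univ` this is a universal
reverse plan. -/
def IsRevPlan {F : Type} (𝓐 : Set (PlanAct F)) (S : Set (Set F)) (a : PlanAct F)
    (π : List (PlanAct F)) : Prop :=
  (∀ b ∈ π, b ∈ 𝓐) ∧
    ∀ s ∈ S, a.pre ⊆ s → SeqApplicable π (a.apply s) ∧ SeqApply π (a.apply s) = s

/-- `a` is uniformly `S`-reversible: some `S`-reverse plan for `a` exists.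
With `S = Set.univ` this is universal uniform reversibility. -/
def UniformlyReversible {F : Type} (𝓐 : Set (PlanAct F)) (S : Set (Set F))
    (a : PlanAct F) : Prop :=
  ∃ π, IsRevPlan 𝓐 S a π

/-- `s'` is reachable from `s` via actions from `𝓐`. -/
def Reachable {F : Type} (𝓐 : Set (PlanAct F)) (s s' : Set F) : Prop :=
  ∃ π : List (PlanAct F), (∀ b ∈ π, b ∈ 𝓐) ∧ SeqApplicable π s ∧ SeqApply π s = s'

theorem stmt3 {F : Type} (𝓐 : Set (PlanAct F)) (a : PlanAct F) (ha : a ∈ 𝓐)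
    (h : UniformlyReversible 𝓐 Set.univ a) :
    a.add = ∅ ∧ a.del ⊆ a.pre ∧ a.add ∪ a.del ⊆ a.pre := by

  obtain ⟨π, hmem, hrev⟩ := h
  have inj : ∀ s s', a.pre ⊆ s → a.pre ⊆ s' → a.apply s = a.apply s' → s = s' := by
    intro s s' hs hs' he
    have h1 := (hrev s (Set.mem_univ s) hs).2
    have h2 := (hrev s' (Set.mem_univ s') hs').2
    rw [← h1, ← h2, he]
  have key : ∀ x, x ∉ a.pre → (x ∈ a.add ∨ x ∈ a.del) → False := by
    intro x hx hor
    have hs : a.pre ⊆ a.pre ∪ {x} := Set.subset_union_left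
    have he : a.apply a.pre = a.apply (a.pre ∪ {x}) := by
      ext y
      simp only [PlanAct.apply, Set.mem_union, Set.mem_diff, Set.mem_singleton_iff]
      constructor
      · rintro (⟨hy, hd⟩ | hy)
        · exact Or.inl ⟨Or.inl hy, hd⟩
        · exact Or.inr hy
      · rintro (⟨hy | rfl, hd⟩ | hy)
        · exact Or.inl ⟨hy, hd⟩
        · rcases hor with hadd | hdel
          · exact Or.inr hadd
          · exact absurd hdel hd
        · exact Or.inr hy
    have heq := inj a.pre (a.pre ∪ {x}) subset_rfl hs he
    have : x ∈ a.pre := by rw [heq]; exact Or.inr rfl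
    exact hx this
  have hadd : a.add = ∅ := by
    ext x
    simp only [Set.mem_empty_iff_false, iff_false]
    intro hxa
    have hxp : x ∉ a.pre := fun hp =>
      Set.eq_empty_iff_forall_notMem.mp a.pre_add x ⟨hp, hxa⟩
    exact key x hxp (Or.inl hxa)
  have hdel : a.del ⊆ a.pre := by
    intro x hxd
    by_contra hxp
    exact key x hxp (Or.inr hxd)
  refine ⟨hadd, hdel, ?_⟩
  intro x hx
  by_contra hxp
  exact key x hxp hx
end

section
/- Let 𝓕 be a set of facts, 𝓐 a set of actions, a ∈ 𝓐 a universally uniformly reversible action, and π a universal reverse plan for a. Then every action b occurring in π satisfies pre(b) ∪ add(b) ∪ del(b) ⊆ pre(a); i.e., any candidate reverse plan containing an action that mentions a fact outside pre(a) cannot be a universal reverse plan for a. -/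
lemma apply_union_single {F : Type} (b : PlanAct F) (t : Set F) (f : F)
    (hadd : f ∉ b.add) (hdel : f ∉ b.del) :
    b.apply (t ∪ {f}) = b.apply t ∪ {f} := by
  unfold PlanAct.apply
  ext x
  by_cases hx : x = f
  · subst hx; simp [hadd, hdel]
  · simp [hx]

lemma apply_touch_eq {F : Type} (b : PlanAct F) (t : Set F) (f : F)
    (h : f ∈ b.add ∨ f ∈ b.del) :
    b.apply (t ∪ {f}) = b.apply t := by
  have hd : ∀ x, ¬(x ∈ b.add ∧ x ∈ b.del) := by
    intro x hx
    have : x ∈ b.add ∩ b.del := hx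
    rw [b.add_del] at this
    exact this
  unfold PlanAct.apply
  ext x
  by_cases hx : x = f
  · subst hx
    rcases h with h | h
    · simp [h]
    · have hna : x ∉ b.add := fun hf => hd x ⟨hf, h⟩
      simp [h, hna]
  · simp [hx]

lemma key_lemma {F : Type} (f : F) :
    ∀ (π : List (PlanAct F)) (t : Set F), f ∉ t →
      SeqApplicable π t → SeqApplicable π (t ∪ {f}) →
      SeqApply π t ≠ SeqApply π (t ∪ {f}) →
      ∀ b ∈ π, f ∉ b.pre ∧ f ∉ b.add ∧ f ∉ b.del := by
  intro π
  induction π with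
  | nil => intro t _ _ _ _ b hb; simp at hb
  | cons b rest ih =>
      intro t hft h1 h2 hne c hc
      obtain ⟨hb1, hr1⟩ := h1
      obtain ⟨hb2, hr2⟩ := h2
      have hpre : f ∉ b.pre := fun hf => hft (hb1 hf)
      have htouch : f ∉ b.add ∧ f ∉ b.del := by
        by_contra h
        push_neg at h
        have h' : f ∈ b.add ∨ f ∈ b.del := by tauto
        have heq := apply_touch_eq b t f h'
        apply hne
        show SeqApply rest (b.apply t) = SeqApply rest (b.apply (t ∪ {f}))
        rw [heq]
      obtain ⟨hadd, hdel⟩ := htouch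
      have heq := apply_union_single b t f hadd hdel
      rcases List.mem_cons.mp hc with hc | hc
      · subst hc; exact ⟨hpre, hadd, hdel⟩
      · have hfn : f ∉ b.apply t := by
          unfold PlanAct.apply; simp; tauto
        have hr2' : SeqApplicable rest (b.apply t ∪ {f}) := heq ▸ hr2
        have hne' : SeqApply rest (b.apply t) ≠ SeqApply rest (b.apply t ∪ {f}) := by
          intro h
          apply hne
          show SeqApply rest (b.apply t) = SeqApply rest (b.apply (t ∪ {f}))
          rw [heq, ← h]
        exact ih (b.apply t) hfn hr1 hr2' hne' c hc

theorem stmt4 {F : Type} (𝓐 : Set (PlanAct F)) (a : PlanAct F) (ha : a ∈ 𝓐)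
    (π : List (PlanAct F)) (hπ : IsRevPlan 𝓐 Set.univ a π) :
    ∀ b ∈ π, b.pre ∪ b.add ∪ b.del ⊆ a.pre := by
  intro b hb f hf
  by_contra hfpre
  obtain ⟨_, hrev⟩ := hπ
  obtain ⟨h1a, h1b⟩ := hrev a.pre (Set.mem_univ _) (subset_refl _)
  obtain ⟨h2a, h2b⟩ := hrev (a.pre ∪ {f}) (Set.mem_univ _) Set.subset_union_left
  have hne : a.pre ≠ a.pre ∪ {f} := by
    intro h
    exact hfpre (h ▸ (Set.mem_union_right _ rfl : f ∈ a.pre ∪ {f}))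
  by_cases htouch : f ∈ a.add ∨ f ∈ a.del
  · have heq := apply_touch_eq a a.pre f htouch
    rw [heq] at h2b
    exact hne (h1b.symm.trans h2b)
  push_neg at htouch
  have heq := apply_union_single a a.pre f htouch.1 htouch.2
  rw [heq] at h2a h2b
  have hfn : f ∉ a.apply a.pre := by
    unfold PlanAct.apply; simp; tauto
  have := key_lemma f π (a.apply a.pre) hfn h1a h2a
    (by rw [h1b, h2b]; exact hne) b hb
  rcases hf with (hf | hf) | hf <;> tauto
end

section
/- Let 𝓕 be a set of facts, 𝓐 a set of actions, and a ∈ 𝓐 with add(a) = ∅ and del(a) ⊆ pre(a). Let π be a sequence of actions from 𝓐 such that every action b in π satisfies pre(b) ∪ add(b) ∪ del(b) ⊆ pre(a). Then π is a universal reverse plan for a if and only if π is applicable in a[pre(a)] and π[a[pre(a)]] = pre(a); i.e., universal reversibility of a via π can be checked on the single starting state s = pre(a). -/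
lemma aux_shift {F : Type} (P : Set F) (π : List (PlanAct F))
    (hloc : ∀ b ∈ π, b.pre ∪ b.add ∪ b.del ⊆ P) (t X : Set F)
    (ht : t ⊆ P) (hX : X ∩ P = ∅) :
    (SeqApplicable π (t ∪ X) ↔ SeqApplicable π t) ∧
      SeqApply π (t ∪ X) = SeqApply π t ∪ X := by
  induction π generalizing t with
  | nil => simp [SeqApplicable, SeqApply]
  | cons b π ih =>
    have hb := hloc b (by simp)
    have hbpre : b.pre ⊆ P := fun x hx => hb (by simp [hx])
    have hbadd : b.add ⊆ P := fun x hx => hb (by simp [hx])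
    have hbdel : b.del ⊆ P := fun x hx => hb (by simp [hx])
    have hloc' : ∀ c ∈ π, c.pre ∪ c.add ∪ c.del ⊆ P := fun c hc => hloc c (by simp [hc])
    have happ : b.apply (t ∪ X) = b.apply t ∪ X := by
      ext x
      simp only [PlanAct.apply, Set.mem_union, Set.mem_diff]
      constructor
      · rintro (⟨(hx | hx), hnd⟩ | hx)
        · exact Or.inl (Or.inl ⟨hx, hnd⟩)
        · exact Or.inr hx
        · exact Or.inl (Or.inr hx)
      · rintro ((⟨hx, hnd⟩ | hx) | hx)
        · exact Or.inl ⟨Or.inl hx, hnd⟩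
        · exact Or.inr hx
        · have : x ∉ b.del := fun hd => by
            have : x ∈ X ∩ P := ⟨hx, hbdel hd⟩
            simp [hX] at this
          exact Or.inl ⟨Or.inr hx, this⟩
    have ht' : b.apply t ⊆ P := by
      intro x hx
      rcases hx with ⟨hx, _⟩ | hx
      · exact ht hx
      · exact hbadd hx
    have hprec : b.pre ⊆ t ∪ X ↔ b.pre ⊆ t := by
      constructor
      · intro h x hx
        rcases h hx with h' | h'
        · exact h'
        · exfalso; have : x ∈ X ∩ P := ⟨h', hbpre hx⟩; simp [hX] at this
      · intro h x hx; exact Or.inl (h hx)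
    obtain ⟨ih1, ih2⟩ := ih hloc' (b.apply t) ht'
    constructor
    · simp only [SeqApplicable, happ, hprec, ih1]
    · simp only [SeqApply, happ, ih2]

theorem stmt5 {F : Type} (𝓐 : Set (PlanAct F)) (a : PlanAct F) (ha : a ∈ 𝓐)
    (hadd : a.add = ∅) (hdel : a.del ⊆ a.pre)
    (π : List (PlanAct F)) (hπA : ∀ b ∈ π, b ∈ 𝓐)
    (hloc : ∀ b ∈ π, b.pre ∪ b.add ∪ b.del ⊆ a.pre) :
    IsRevPlan 𝓐 Set.univ a π ↔
      (SeqApplicable π (a.apply a.pre) ∧ SeqApply π (a.apply a.pre) = a.pre) := by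
  constructor
  · intro ⟨_, h⟩
    exact h a.pre (Set.mem_univ _) (le_refl _)
  · rintro ⟨h1, h2⟩
    refine ⟨hπA, ?_⟩
    intro s _ hs
    have hdisj : (s \ a.pre) ∩ a.pre = ∅ := by
      ext x; simp only [Set.mem_inter_iff, Set.mem_diff, Set.mem_empty_iff_false]
      tauto
    have hsplit : a.apply s = a.apply a.pre ∪ (s \ a.pre) := by
      ext x
      simp only [PlanAct.apply, hadd, Set.union_empty, Set.mem_union, Set.mem_diff]
      constructor
      · rintro ⟨hx, hnd⟩
        by_cases hp : x ∈ a.pre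
        · exact Or.inl ⟨hp, hnd⟩
        · exact Or.inr ⟨hx, hp⟩
      · rintro (⟨hx, hnd⟩ | ⟨hx, hp⟩)
        · exact ⟨hs hx, hnd⟩
        · exact ⟨hx, fun hd => hp (hdel hd)⟩
    have hsub : a.apply a.pre ⊆ a.pre := by
      intro x hx
      rcases hx with ⟨hx, _⟩ | hx
      · exact hx
      · rw [hadd] at hx; exact hx.elim
    obtain ⟨e1, e2⟩ := aux_shift a.pre π hloc (a.apply a.pre) (s \ a.pre) hsub hdisj
    rw [hsplit]
    refine ⟨e1.mpr h1, ?_⟩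
    rw [e2, h2]
    ext x; simp only [Set.mem_union, Set.mem_diff]
    constructor
    · rintro (hx | ⟨hx, _⟩)
      · exact hs hx
      · exact hx
    · intro hx
      by_cases hp : x ∈ a.pre
      · exact Or.inl hp
      · exact Or.inr ⟨hx, hp⟩
end

section
/- Let 𝓕 be a set of facts, 𝓐 a set of actions, and a ∈ 𝓐. Then a is universally uniformly reversible if and only if: add(a) = ∅, del(a) ⊆ pre(a), and there exists a sequence π of actions from 𝓐, all of whose actions b satisfy pre(b) ∪ add(b) ∪ del(b) ⊆ pre(a), such that π is applicable in a[pre(a)] and π[a[pre(a)]] = pre(a). -/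
/-- Extension lemma: facts not deleted by any action of `π` can be freely added. -/
lemma seq_ext {F : Type} (e : Set F) :
    ∀ (π : List (PlanAct F)) (t : Set F),
      (∀ b ∈ π, b.del ∩ e = ∅) → SeqApplicable π t →
      SeqApplicable π (t ∪ e) ∧ SeqApply π (t ∪ e) = SeqApply π t ∪ e
  | [], t, _, _ => ⟨trivial, rfl⟩
  | b :: π, t, hd, ⟨hpre, happ⟩ => by
    have hde : ∀ x ∈ e, x ∉ b.del := by
      intro x hx hxd
      have : x ∈ b.del ∩ e := ⟨hxd, hx⟩
      rw [hd b List.mem_cons_self] at this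
      exact this
    have key : b.apply (t ∪ e) = b.apply t ∪ e := by
      ext x
      have := hde x
      simp only [PlanAct.apply, Set.mem_union, Set.mem_diff]
      tauto
    have hrest := seq_ext e π (b.apply t)
      (fun c hc => hd c (List.mem_cons_of_mem _ hc)) happ
    refine ⟨⟨hpre.trans Set.subset_union_left, ?_⟩, ?_⟩
    · rw [key]; exact hrest.1
    · show SeqApply π (b.apply (t ∪ e)) = SeqApply π (b.apply t) ∪ e
      rw [key]; exact hrest.2

/-- If a fact `f` absent from `t` is mentioned by some action of `π`, then adding
`f` to the initial state does not change the final state (or `f` is untouched). -/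
lemma seq_single {F : Type} (f : F) :
    ∀ (π : List (PlanAct F)) (t : Set F), f ∉ t → SeqApplicable π t →
      (∀ b ∈ π, f ∉ b.pre ∧ f ∉ b.add ∧ f ∉ b.del) ∨
      SeqApply π (t ∪ {f}) = SeqApply π t
  | [], t, _, _ => Or.inl (by simp)
  | b :: π, t, hft, ⟨hpre, happ⟩ => by
    by_cases hmem : f ∈ b.add ∨ f ∈ b.del
    · right
      have key : b.apply (t ∪ {f}) = b.apply t := by
        have had : f ∈ b.add → f ∉ b.del := by
          intro h1 h2
          have : f ∈ b.add ∩ b.del := ⟨h1, h2⟩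
          rw [b.add_del] at this; exact this
        ext x
        simp only [PlanAct.apply, Set.mem_union, Set.mem_diff, Set.mem_singleton_iff]
        constructor
        · rintro (⟨(h | rfl), hnd⟩ | h)
          · exact Or.inl ⟨h, hnd⟩
          · rcases hmem with h | h
            · exact Or.inr h
            · exact absurd h hnd
          · exact Or.inr h
        · rintro (⟨h, hnd⟩ | h)
          · exact Or.inl ⟨Or.inl h, hnd⟩
          · exact Or.inr h
      show SeqApply π (b.apply (t ∪ {f})) = SeqApply π (b.apply t)
      rw [key]
    · push_neg at hmem
      obtain ⟨hna, hnd⟩ := hmem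
      have key : b.apply (t ∪ {f}) = b.apply t ∪ {f} := by
        ext x
        simp only [PlanAct.apply, Set.mem_union, Set.mem_diff, Set.mem_singleton_iff]
        constructor
        · rintro (⟨(h | rfl), hnd'⟩ | h)
          · exact Or.inl (Or.inl ⟨h, hnd'⟩)
          · exact Or.inr rfl
          · exact Or.inl (Or.inr h)
        · rintro ((⟨h, hnd'⟩ | h) | rfl)
          · exact Or.inl ⟨Or.inl h, hnd'⟩
          · exact Or.inr h
          · exact Or.inl ⟨Or.inr rfl, hnd⟩
      have hft' : f ∉ b.apply t := by
        simp only [PlanAct.apply, Set.mem_union, Set.mem_diff]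
        rintro (⟨h, _⟩ | h)
        · exact hft h
        · exact hna h
      rcases seq_single f π (b.apply t) hft' happ with hall | hcol
      · left
        intro c hc
        rcases List.mem_cons.mp hc with rfl | hc'
        · exact ⟨fun h => hft (hpre h), hna, hnd⟩
        · exact hall c hc'
      · right
        show SeqApply π (b.apply (t ∪ {f})) = SeqApply π (b.apply t)
        rw [key]; exact hcol

theorem stmt6 {F : Type} (𝓐 : Set (PlanAct F)) (a : PlanAct F) (ha : a ∈ 𝓐) :
    UniformlyReversible 𝓐 Set.univ a ↔
      (a.add = ∅ ∧ a.del ⊆ a.pre ∧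
        ∃ π : List (PlanAct F), (∀ b ∈ π, b ∈ 𝓐) ∧
          (∀ b ∈ π, b.pre ∪ b.add ∪ b.del ⊆ a.pre) ∧
          SeqApplicable π (a.apply a.pre) ∧ SeqApply π (a.apply a.pre) = a.pre) := by
  constructor
  · rintro ⟨π, hπA, hπ⟩
    have h1 := hπ a.pre (Set.mem_univ _) subset_rfl
    -- add = ∅
    have hadd : a.add = ∅ := by
      have h2 := hπ (a.pre ∪ a.add) (Set.mem_univ _) Set.subset_union_left
      have heq : a.apply (a.pre ∪ a.add) = a.apply a.pre := by
        have had : ∀ x ∈ a.add, x ∉ a.del := by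
          intro x h1' h2'
          have : x ∈ a.add ∩ a.del := ⟨h1', h2'⟩
          rw [a.add_del] at this; exact this
        ext x
        have := had x
        simp only [PlanAct.apply, Set.mem_union, Set.mem_diff]
        tauto
      rw [heq, h1.2] at h2
      have hsub : a.add ⊆ a.pre := by
        intro x hx
        have : x ∈ a.pre ∪ a.add := Or.inr hx
        rwa [← h2.2] at this
      ext x
      simp only [Set.mem_empty_iff_false, iff_false]
      intro hx
      have : x ∈ a.pre ∩ a.add := ⟨hsub hx, hx⟩
      rw [a.pre_add] at this; exact this
    -- del ⊆ pre
    have hdel : a.del ⊆ a.pre := by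
      have h2 := hπ (a.pre ∪ a.del) (Set.mem_univ _) Set.subset_union_left
      have heq : a.apply (a.pre ∪ a.del) = a.apply a.pre := by
        ext x
        simp only [PlanAct.apply, Set.mem_union, Set.mem_diff]
        tauto
      rw [heq, h1.2] at h2
      intro x hx
      have : x ∈ a.pre ∪ a.del := Or.inr hx
      rwa [← h2.2] at this
    refine ⟨hadd, hdel, π, hπA, ?_, h1⟩
    intro b hb x hx
    by_contra hxp
    have hxt : x ∉ a.apply a.pre := by
      simp only [PlanAct.apply, hadd, Set.mem_union, Set.mem_diff,
        Set.mem_empty_iff_false, or_false]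
      rintro ⟨h, _⟩; exact hxp h
    rcases seq_single x π (a.apply a.pre) hxt h1.1 with hall | hcol
    · obtain ⟨hp, hA, hd⟩ := hall b hb
      rcases hx with (h | h) | h
      · exact hp h
      · exact hA h
      · exact hd h
    · have h3 := hπ (a.pre ∪ {x}) (Set.mem_univ _) Set.subset_union_left
      have heq : a.apply (a.pre ∪ {x}) = a.apply a.pre ∪ {x} := by
        have hxd : x ∉ a.del := fun h => hxp (hdel h)
        ext y
        have hyd : y = x → y ∉ a.del := fun h => h ▸ hxd
        simp only [PlanAct.apply, Set.mem_union, Set.mem_diff, Set.mem_singleton_iff]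
        tauto
      rw [heq] at h3
      have : a.pre ∪ {x} = a.pre := by rw [← h3.2, hcol, h1.2]
      have : x ∈ a.pre := by
        rw [← this]; exact Or.inr rfl
      exact hxp this
  · rintro ⟨hadd, hdel, π, hπA, hconf, happ, heq⟩
    refine ⟨π, hπA, ?_⟩
    intro s _ hs
    set e := s \ a.pre with he
    have hde : ∀ b ∈ π, b.del ∩ e = ∅ := by
      intro b hb
      ext x
      simp only [Set.mem_inter_iff, Set.mem_empty_iff_false, iff_false]
      rintro ⟨hxd, hxe⟩
      exact hxe.2 (hconf b hb (Or.inr hxd))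
    have hs' : a.apply s = a.apply a.pre ∪ e := by
      ext x
      simp only [PlanAct.apply, hadd, Set.mem_union, Set.mem_empty_iff_false, or_false,
        Set.mem_diff, he]
      constructor
      · rintro ⟨hxs, hxd⟩
        by_cases hxp : x ∈ a.pre
        · exact Or.inl ⟨hxp, hxd⟩
        · exact Or.inr ⟨hxs, hxp⟩
      · rintro (⟨hxp, hxd⟩ | ⟨hxs, hxp⟩)
        · exact ⟨hs hxp, hxd⟩
        · exact ⟨hxs, fun h => hxp (hdel h)⟩
    have hext := seq_ext e π (a.apply a.pre) hde happ
    rw [hs', hext.2, heq]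
    refine ⟨hext.1, ?_⟩
    ext x
    simp only [Set.mem_union, he, Set.mem_diff]
    constructor
    · rintro (h | ⟨h, _⟩) <;> [exact hs h; exact h]
    · intro h
      by_cases hxp : x ∈ a.pre
      · exact Or.inl hxp
      · exact Or.inr ⟨h, hxp⟩
end

section
/- (Locality lemma) Let 𝓕 be a set of facts, F' ⊆ 𝓕, and π a finite sequence of actions such that every action b in π satisfies pre(b) ∪ add(b) ∪ del(b) ⊆ F'. Let s and s' be states with s ∩ F' = s' ∩ F'. If π is applicable in s, then π is applicable in s', and moreover π[s'] ∩ F' = π[s] ∩ F' and π[s'] \ F' = s' \ F'. -/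
theorem stmt8 {F : Type} (F' : Set F) (π : List (PlanAct F))
    (hloc : ∀ b ∈ π, b.pre ∪ b.add ∪ b.del ⊆ F')
    (s s' : Set F) (hss : s ∩ F' = s' ∩ F') (h : SeqApplicable π s) :
    SeqApplicable π s' ∧ SeqApply π s' ∩ F' = SeqApply π s ∩ F' ∧
      SeqApply π s' \ F' = s' \ F' := by
  induction π generalizing s s' with
  | nil => exact ⟨trivial, by simp [SeqApply, hss], rfl⟩
  | cons b π ih =>
    obtain ⟨hpre, happ⟩ := h
    have hb := hloc b (by simp)
    have hpreF' : b.pre ⊆ F' := fun x hx => hb (Or.inl (Or.inl hx))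
    have haddF' : b.add ⊆ F' := fun x hx => hb (Or.inl (Or.inr hx))
    have hdelF' : b.del ⊆ F' := fun x hx => hb (Or.inr hx)
    have hpre' : b.pre ⊆ s' := fun x hx => by
      have : x ∈ s ∩ F' := ⟨hpre hx, hpreF' hx⟩
      rw [hss] at this; exact this.1
    have hinter : b.apply s ∩ F' = b.apply s' ∩ F' := by
      ext x
      simp only [PlanAct.apply, Set.mem_inter_iff, Set.mem_union, Set.mem_diff]
      constructor
      · rintro ⟨h1 | h1, h2⟩
        · have : x ∈ s' ∩ F' := hss ▸ (⟨h1.1, h2⟩ : x ∈ s ∩ F')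
          exact ⟨Or.inl ⟨this.1, h1.2⟩, h2⟩
        · exact ⟨Or.inr h1, h2⟩
      · rintro ⟨h1 | h1, h2⟩
        · have : x ∈ s ∩ F' := hss.symm ▸ (⟨h1.1, h2⟩ : x ∈ s' ∩ F')
          exact ⟨Or.inl ⟨this.1, h1.2⟩, h2⟩
        · exact ⟨Or.inr h1, h2⟩
    have hdiff : b.apply s' \ F' = s' \ F' := by
      ext x
      simp only [PlanAct.apply, Set.mem_diff, Set.mem_union]
      constructor
      · rintro ⟨h1 | h1, h2⟩
        · exact ⟨h1.1, h2⟩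
        · exact absurd (haddF' h1) h2
      · rintro ⟨h1, h2⟩
        exact ⟨Or.inl ⟨h1, fun hd => h2 (hdelF' hd)⟩, h2⟩
    obtain ⟨a1, a2, a3⟩ := ih (fun c hc => hloc c (by simp [hc])) _ _ hinter happ
    refine ⟨⟨hpre', a1⟩, a2, ?_⟩
    simp only [SeqApply] at a3 ⊢
    rw [a3, hdiff]
end

section
/- (Plan shortening via reverse plans) Let Π = ⟨𝓕, 𝓐, s0, G⟩ be a STRIPS planning task, a ∈ 𝓐, S a set of states, and π an S-reverse plan for a. Let ρ1 and ρ2 be sequences of actions from 𝓐 with ρ1[s0] ∈ S. If the concatenation ρ1 ⧺ ⟨a⟩ ⧺ π ⧺ ρ2 is a plan for Π, then ρ1 ⧺ ρ2 is also a plan for Π (of strictly smaller length). -/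
/-- A STRIPS planning task ⟨𝓕, 𝓐, s0, G⟩ (the set of facts 𝓕 is the type `F`). -/
structure Strips (F : Type) where
  acts : Set (PlanAct F)
  init : Set F
  goal : Set F

/-- R_Π: the set of states reachable from the initial state. -/
def ReachableStates {F : Type} (T : Strips F) : Set (Set F) :=
  {s | Reachable T.acts T.init s}

/-- A plan for a STRIPS task: an applicable sequence of actions from the task's
action set whose result contains the goal. -/
def IsPlan {F : Type} (T : Strips F) (σ : List (PlanAct F)) : Prop :=
  (∀ b ∈ σ, b ∈ T.acts) ∧ SeqApplicable σ T.init ∧ T.goal ⊆ SeqApply σ T.init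

lemma seqApply_append {F : Type} (l1 l2 : List (PlanAct F)) (s : Set F) :
    SeqApply (l1 ++ l2) s = SeqApply l2 (SeqApply l1 s) := by
  induction l1 generalizing s with
  | nil => rfl
  | cons a l ih => simp [SeqApply, ih]

lemma seqApplicable_append {F : Type} (l1 l2 : List (PlanAct F)) (s : Set F) :
    SeqApplicable (l1 ++ l2) s ↔
      SeqApplicable l1 s ∧ SeqApplicable l2 (SeqApply l1 s) := by
  induction l1 generalizing s with
  | nil => simp [SeqApplicable, SeqApply]
  | cons a l ih => simp [SeqApplicable, SeqApply, ih, and_assoc]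

theorem stmt9 {F : Type} (T : Strips F) (a : PlanAct F) (ha : a ∈ T.acts)
    (S : Set (Set F)) (π : List (PlanAct F)) (hπ : IsRevPlan T.acts S a π)
    (ρ1 ρ2 : List (PlanAct F))
    (h1 : ∀ b ∈ ρ1, b ∈ T.acts) (h2 : ∀ b ∈ ρ2, b ∈ T.acts)
    (hρ1 : SeqApply ρ1 T.init ∈ S)
    (hplan : IsPlan T (ρ1 ++ [a] ++ π ++ ρ2)) :
    IsPlan T (ρ1 ++ ρ2) ∧
      (ρ1 ++ ρ2).length < (ρ1 ++ [a] ++ π ++ ρ2).length := by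
  obtain ⟨hall, happ, hgoal⟩ := hplan
  set s1 := SeqApply ρ1 T.init with hs1
  rw [seqApplicable_append, seqApplicable_append, seqApplicable_append] at happ
  obtain ⟨⟨⟨happ1, happa⟩, happπ⟩, happ2⟩ := happ
  simp only [SeqApplicable, and_true, SeqApply] at happa
  obtain ⟨_, hrev⟩ := hπ
  obtain ⟨hπapp, hπeq⟩ := hrev s1 hρ1 happa
  rw [seqApply_append, seqApply_append, seqApply_append] at hgoal
  rw [seqApply_append, seqApply_append] at happ2
  simp only [SeqApply] at hgoal happ2 ⊢
  rw [hπeq] at hgoal happ2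
  refine ⟨⟨?_, ?_, ?_⟩, ?_⟩
  · intro b hb; rcases List.mem_append.1 hb with h | h
    exacts [h1 b h, h2 b h]
  · rw [seqApplicable_append]; exact ⟨happ1, happ2⟩
  · rw [seqApply_append]; exact hgoal
  · simp [Nat.lt_succ_of_le, Nat.le_add_right]
end

section
/- Let n ≥ 0 and consider the domain rev-n with facts 𝓕 = {f_0, …, f_n} and actions 𝓐 consisting of del-all = ⟨𝓕, ∅, 𝓕⟩, add-f_0 = ⟨∅, {f_0}, ∅⟩, and add-f_k = ⟨{f_{k−1}}, {f_k}, ∅⟩ for 1 ≤ k ≤ n. Then the sequence ⟨add-f_0, add-f_1, …, add-f_n⟩ (of length n+1) is a universal reverse plan for del-all; hence del-all is universally uniformly reversible. -/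
/-- The action del-all = ⟨𝓕, ∅, 𝓕⟩ of the domain rev-n, 𝓕 = {f_0, …, f_n}. -/
def delAll (n : ℕ) : PlanAct (Fin (n + 1)) where
  pre := Set.univ
  add := ∅
  del := Set.univ
  add_del := by simp
  pre_add := by simp

/-- The action add-f_k of the domain rev-n: precondition ∅ for k = 0 and
{f_{k-1}} for k ≥ 1, add effect {f_k}, no delete effects. -/
def addFk (n : ℕ) (k : Fin (n + 1)) : PlanAct (Fin (n + 1)) where
  pre := {j | (j : ℕ) + 1 = (k : ℕ)}
  add := {k}
  del := ∅
  add_del := by simp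
  pre_add := by
    ext j
    simp only [Set.mem_inter_iff, Set.mem_setOf_eq, Set.mem_singleton_iff,
      Set.mem_empty_iff_false, iff_false, not_and]
    rintro h rfl
    omega

/-- The action set 𝓐 of the domain rev-n. -/
def revActs (n : ℕ) : Set (PlanAct (Fin (n + 1))) :=
  insert (delAll n) (Set.range (addFk n))

/-- The sequence ⟨add-f_0, add-f_1, …, add-f_n⟩. -/
def revPlanSeq (n : ℕ) : List (PlanAct (Fin (n + 1))) :=
  (List.finRange (n + 1)).map (addFk n)

lemma aux14 (n : ℕ) : ∀ d k : ℕ, k + d = n + 1 →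
    SeqApplicable (((List.finRange (n + 1)).drop k).map (addFk n))
      {j : Fin (n + 1) | (j : ℕ) < k} ∧
    SeqApply (((List.finRange (n + 1)).drop k).map (addFk n))
      {j : Fin (n + 1) | (j : ℕ) < k} = Set.univ := by
  intro d
  induction d with
  | zero =>
    intro k hk
    have h : (List.finRange (n + 1)).drop k = [] := by
      apply List.drop_eq_nil_of_le
      simp [hk.symm]
    rw [h]
    refine ⟨trivial, ?_⟩
    simp only [List.map_nil, SeqApply]
    ext j
    simp only [Set.mem_setOf_eq, Set.mem_univ, iff_true]
    omega
  | succ d ih =>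
    intro k hk
    have hklt : k < (List.finRange (n + 1)).length := by simp; omega
    rw [List.drop_eq_getElem_cons hklt, List.getElem_finRange, Fin.cast_mk]
    simp only [List.map_cons, SeqApplicable, SeqApply]
    have happly : (addFk n ⟨k, by omega⟩).apply {j : Fin (n + 1) | (j : ℕ) < k}
        = {j : Fin (n + 1) | (j : ℕ) < k + 1} := by
      ext j
      simp only [PlanAct.apply, addFk, Set.mem_union, Set.mem_diff,
        Set.mem_setOf_eq, Set.mem_empty_iff_false, not_false_iff, and_true,
        Set.mem_singleton_iff, Fin.ext_iff]
      omega
    have hrest := ih (k + 1) (by omega)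
    rw [happly]
    refine ⟨⟨?_, hrest.1⟩, hrest.2⟩
    intro j hj
    simp only [addFk, Set.mem_setOf_eq] at hj ⊢
    omega

theorem stmt14 (n : ℕ) :
    IsRevPlan (revActs n) Set.univ (delAll n) (revPlanSeq n) ∧
      UniformlyReversible (revActs n) Set.univ (delAll n) := by
  have hrev : IsRevPlan (revActs n) Set.univ (delAll n) (revPlanSeq n) := by
    constructor
    · intro b hb
      simp only [revPlanSeq, List.mem_map] at hb
      obtain ⟨k, -, rfl⟩ := hb
      exact Set.mem_insert_iff.mpr (Or.inr ⟨k, rfl⟩)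
    · intro s _ hpre
      have hs : s = Set.univ := Set.eq_univ_of_univ_subset hpre
      have happ : (delAll n).apply s = {j : Fin (n + 1) | (j : ℕ) < 0} := by
        ext j
        simp [PlanAct.apply, delAll]
      have h := aux14 n (n + 1) 0 (by omega)
      rw [List.drop_zero] at h
      rw [happ, hs]
      exact ⟨h.1, by rw [revPlanSeq]; exact h.2⟩
  exact ⟨hrev, ⟨revPlanSeq n, hrev⟩⟩
end

section
/- Let n ≥ 0 and consider the domain rev-n with facts 𝓕 = {f_0, …, f_n} and actions 𝓐 consisting of del-all = ⟨𝓕, ∅, 𝓕⟩, add-f_0 = ⟨∅, {f_0}, ∅⟩, and add-f_k = ⟨{f_{k−1}}, {f_k}, ∅⟩ for 1 ≤ k ≤ n. Then ⟨add-f_0, add-f_1, …, add-f_n⟩ is the unique universal reverse plan of length n+1 for del-all: every sequence of n+1 actions from 𝓐 that is a universal reverse plan for del-all equals this sequence. -/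
lemma ncard_below (n m : ℕ) (hm : m ≤ n+1) :
    ({j : Fin (n+1) | (j:ℕ) < m}).ncard = m := by
  rw [show {j : Fin (n+1) | (j:ℕ) < m} = Set.range (fun i : Fin m => Fin.castLE hm i) by
    ext j; simp only [Set.mem_setOf_eq, Set.mem_range]; constructor
    · intro h; exact ⟨⟨j, h⟩, rfl⟩
    · rintro ⟨i, rfl⟩; exact i.2]
  rw [← Set.image_univ,
    Set.ncard_image_of_injective _ (fun a b hab => by simpa [Fin.ext_iff] using hab)]
  simp [Set.ncard_univ]

lemma ncard_apply_le (n : ℕ) (a : PlanAct (Fin (n+1))) (ha : a ∈ revActs n)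
    (s : Set (Fin (n+1))) : (a.apply s).ncard ≤ s.ncard + 1 := by
  rcases ha with rfl | ⟨k, rfl⟩
  · simp [PlanAct.apply, delAll]
  · calc (PlanAct.apply (addFk n k) s).ncard ≤ s.ncard + ({k} : Set (Fin (n+1))).ncard := by
          simpa [PlanAct.apply, addFk] using Set.ncard_union_le s {k}
    _ = s.ncard + 1 := by simp

lemma ncard_seqApply_le (n : ℕ) (π : List (PlanAct (Fin (n+1))))
    (hA : ∀ b ∈ π, b ∈ revActs n) (s : Set (Fin (n+1))) :
    (SeqApply π s).ncard ≤ s.ncard + π.length := by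
  induction π generalizing s with
  | nil => simp [SeqApply]
  | cons a π ih =>
    have h1 := ih (fun b hb => hA b (List.mem_cons_of_mem a hb)) (a.apply s)
    have h2 := ncard_apply_le n a (hA a List.mem_cons_self) s
    simp only [SeqApply, List.length_cons]
    omega

lemma key_lemma_s15 (n : ℕ) : ∀ (π : List (PlanAct (Fin (n+1)))) (m : ℕ),
    m + π.length = n + 1 →
    (∀ b ∈ π, b ∈ revActs n) →
    SeqApplicable π {j : Fin (n+1) | (j:ℕ) < m} →
    SeqApply π {j : Fin (n+1) | (j:ℕ) < m} = Set.univ →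
    π = ((List.finRange (n+1)).drop m).map (addFk n) := by
  intro π
  induction π with
  | nil =>
    intro m hm _ _ _
    simp only [List.length_nil, add_zero] at hm
    subst hm
    simp
  | cons a π ih =>
    intro m hm hA happ heq
    have hmn : m < n + 1 := by simp at hm; omega
    set s : Set (Fin (n+1)) := {j : Fin (n+1) | (j:ℕ) < m} with hs
    obtain ⟨hpre, happ'⟩ := happ
    simp only [SeqApply] at heq
    have ha := hA a List.mem_cons_self
    have hA' : ∀ b ∈ π, b ∈ revActs n := fun b hb => hA b (List.mem_cons_of_mem a hb)
    -- a must be addFk n ⟨m, hmn⟩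
    have hak : a = addFk n ⟨m, hmn⟩ := by
      rcases ha with rfl | ⟨k, rfl⟩
      · -- delAll: pre = univ ⊆ s impossible since ⟨m, hmn⟩ ∉ s
        exfalso
        have := hpre (Set.mem_univ (⟨m, hmn⟩ : Fin (n+1)))
        simp [hs, delAll] at this
      · -- addFk k
        rcases lt_trichotomy (k : ℕ) m with hk | hk | hk
        · -- k < m: apply s = s, then cardinality contradiction
          exfalso
          have hap : (addFk n k).apply s = s := by
            ext j
            simp only [PlanAct.apply, addFk, Set.diff_empty, Set.mem_union,
              Set.mem_singleton_iff, hs, Set.mem_setOf_eq]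
            constructor
            · rintro (h | rfl); · exact h
              · exact hk
            · intro h; exact Or.inl h
          rw [hap] at happ' heq
          have hcard := ncard_seqApply_le n π hA' s
          rw [heq] at hcard
          have h1 : (Set.univ : Set (Fin (n+1))).ncard = n + 1 := by simp [Set.ncard_univ]
          have h2 : s.ncard = m := ncard_below n m (le_of_lt hmn)
          simp only [List.length_cons] at hm
          omega
        · -- k = m
          congr 1
          exact Fin.ext hk
        · -- k > m: precondition fails
          exfalso
          have hk1 : (k : ℕ) - 1 < n + 1 := by omega
          have hmem : (⟨(k : ℕ) - 1, hk1⟩ : Fin (n+1)) ∈ (addFk n k).pre := by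
            simp only [addFk, Set.mem_setOf_eq]
            omega
          have := hpre hmem
          simp only [hs, Set.mem_setOf_eq] at this
          omega
    subst hak
    have hap : (addFk n ⟨m, hmn⟩).apply s = {j : Fin (n+1) | (j:ℕ) < m + 1} := by
      ext j
      simp only [PlanAct.apply, addFk, Set.diff_empty, Set.mem_union,
        Set.mem_singleton_iff, hs, Set.mem_setOf_eq, Fin.ext_iff]
      omega
    rw [hap] at happ' heq
    have hrec := ih (m + 1) (by simp at hm ⊢; omega) hA' happ' heq
    have hd : (List.finRange (n+1)).drop m
        = (⟨m, hmn⟩ : Fin (n+1)) :: (List.finRange (n+1)).drop (m+1) := by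
      rw [List.drop_eq_getElem_cons (by simpa using hmn)]
      congr 1
      simp [List.getElem_finRange]
    rw [hrec, hd, List.map_cons]

theorem stmt15 (n : ℕ) (π : List (PlanAct (Fin (n + 1))))
    (hlen : π.length = n + 1)
    (hπ : IsRevPlan (revActs n) Set.univ (delAll n) π) :
    π = revPlanSeq n := by
  obtain ⟨hA, hrev⟩ := hπ
  have huniv := hrev Set.univ (Set.mem_univ _) (by simp [delAll])
  have hap : (delAll n).apply Set.univ = ({j : Fin (n+1) | (j:ℕ) < 0} : Set (Fin (n+1))) := by
    ext j; simp [PlanAct.apply, delAll]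
  rw [hap] at huniv
  have := key_lemma_s15 n π 0 (by omega) hA huniv.1 huniv.2
  simpa [revPlanSeq] using this
end

section
/- Let n ≥ 0 and consider the domain rev-n with facts 𝓕 = {f_0, …, f_n} and actions 𝓐 consisting of del-all = ⟨𝓕, ∅, 𝓕⟩, add-f_0 = ⟨∅, {f_0}, ∅⟩, and add-f_k = ⟨{f_{k−1}}, {f_k}, ∅⟩ for 1 ≤ k ≤ n. Then no sequence of actions from 𝓐 of length at most n is a universal reverse plan for del-all; every universal reverse plan for del-all has length at least n+1. -/
lemma card_step (n : ℕ) (a : PlanAct (Fin (n + 1))) (ha : a ∈ revActs n)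
    (s : Set (Fin (n + 1))) : (a.apply s).ncard ≤ s.ncard + 1 := by
  rcases ha with rfl | ⟨k, rfl⟩
  · have : (delAll n).apply s = ∅ := by
      simp [PlanAct.apply, delAll]
    simp [this]
  · have : (addFk n k).apply s = insert k s := by
      ext j
      simp only [PlanAct.apply, addFk, Set.diff_empty, Set.mem_union,
        Set.mem_singleton_iff, Set.mem_insert_iff]
      tauto
    rw [this]
    exact Set.ncard_insert_le k s

lemma card_seq (n : ℕ) : ∀ (π : List (PlanAct (Fin (n + 1)))),
    (∀ b ∈ π, b ∈ revActs n) → ∀ s : Set (Fin (n + 1)),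
    (SeqApply π s).ncard ≤ s.ncard + π.length
  | [], _, s => by simp [SeqApply]
  | a :: π, h, s => by
    have h1 := card_seq n π (fun b hb => h b (List.mem_cons_of_mem _ hb)) (a.apply s)
    have h2 := card_step n a (h a List.mem_cons_self) s
    simp only [SeqApply, List.length_cons]
    omega

lemma key (n : ℕ) (π : List (PlanAct (Fin (n + 1))))
    (h : IsRevPlan (revActs n) Set.univ (delAll n) π) : n + 1 ≤ π.length := by
  obtain ⟨hmem, hrev⟩ := h
  have h2 := (hrev Set.univ (Set.mem_univ _) (by simp [delAll])).2
  have happ : (delAll n).apply Set.univ = (∅ : Set (Fin (n+1))) := by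
    simp [PlanAct.apply, delAll]
  have hc := card_seq n π hmem ((delAll n).apply Set.univ)
  rw [h2, happ] at hc
  simp only [Set.ncard_univ, Set.ncard_empty, Nat.card_eq_fintype_card,
    Fintype.card_fin, zero_add] at hc
  exact hc

theorem stmt16 (n : ℕ) :
    (∀ π : List (PlanAct (Fin (n + 1))), π.length ≤ n →
        ¬ IsRevPlan (revActs n) Set.univ (delAll n) π) ∧
      (∀ π : List (PlanAct (Fin (n + 1))),
        IsRevPlan (revActs n) Set.univ (delAll n) π → n + 1 ≤ π.length) := by
  constructor
  · intro π hlen hrev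
    have := key n π hrev
    omega
  · exact key n
end
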